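/- arXiv:math/0607282 — 3 statements merged into one kernel-verified Lean document; each statement's English description precedes it below -/
import Mathlib

section
/- Let β ∈ (0,2], c ∈ (0,1], and let φ : (0,c] → (0,∞) be measurable and regularly varying at zero with index −(β+1). Set l(x) = x^{β+1} φ(x). Then for every r > β: ∫₀^t ( ∫_{|x| ≤ s^{1/β}} |x|^r φ(|x|) dx ) ds ∼ (2β/((r−β)·r)) · t^{r/β} · l(t^{1/β}) as t → 0+ (t ≤ c^β), i.e. the ratio of the two sides tends to 1; in particular the inner integral satisfies ∫_{|x| ≤ s^{1/β}} |x|^r φ(|x|) dx ∼ (2/(r−β)) s^{r/β − 1} l(s^{1/β}) as s → 0+. -/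
open MeasureTheory ProbabilityTheory Filter Set Topology ENNReal NNReal

noncomputable section

/-- The Lévy exponent `Ψ(u) = -iua - ∫ (e^{iux} - 1 - iux 1_{|x|≤1}) ν(dx)`
for a Lévy process with characteristics `(a, 0, ν)` (no Brownian component). -/
def levyExponent (a : ℝ) (ν : Measure ℝ) (u : ℝ) : ℂ :=
  -(Complex.I * u * a) -
    ∫ x : ℝ, (Complex.exp (Complex.I * u * x) - 1 -
      Complex.I * u * x * Set.indicator {y : ℝ | abs y ≤ 1} (fun _ => (1 : ℂ)) x) ∂ν

/-- `X` is a real Lévy process with characteristics `(a, 0, ν)` (no Brownian component)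
on the probability space `(Ω, P)`: it starts at `0`, has a.s. càdlàg paths, independent
and stationary increments, characteristic function `exp(-tΨ(u))`, and `ν` is a Lévy
measure. -/
structure IsLevyNoBM {Ω : Type*} [MeasurableSpace Ω] (P : Measure Ω)
    (X : ℝ → Ω → ℝ) (a : ℝ) (ν : Measure ℝ) : Prop where
  isProb : IsProbabilityMeasure P
  meas : ∀ t : ℝ, Measurable (X t)
  zero : ∀ᵐ ω ∂P, X 0 ω = 0
  cadlag : ∀ᵐ ω ∂P, ∀ t : ℝ, 0 ≤ t →
    ContinuousWithinAt (fun s => X s ω) (Set.Ici t) t ∧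
      (0 < t → ∃ L : ℝ, Tendsto (fun s => X s ω) (nhdsWithin t (Set.Iio t)) (nhds L))
  indepIncr : ∀ (n : ℕ) (t : Fin (n + 1) → ℝ), Monotone t → 0 ≤ t 0 →
    iIndepFun
      (fun i : Fin n => fun ω => X (t i.succ) ω - X (t i.castSucc) ω) P
  statIncr : ∀ s t : ℝ, 0 ≤ s → 0 ≤ t →
    Measure.map (fun ω => X (t + s) ω - X s ω) P = Measure.map (X t) P
  nu_zero : ν {0} = 0
  nu_levy : ∫⁻ x : ℝ, ENNReal.ofReal (min (x ^ 2) 1) ∂ν < ⊤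
  charFn : ∀ (u t : ℝ), 0 ≤ t →
    ∫ ω, Complex.exp (Complex.I * u * X t ω) ∂P =
      Complex.exp (-(t : ℂ) * levyExponent a ν u)

/-- The Blumenthal–Getoor index `β = inf {p > 0 : ∫_{|x|≤1} |x|^p ν(dx) < ∞}`. -/
def bgIndex (ν : Measure ℝ) : ℝ :=
  sInf {p : ℝ | 0 < p ∧ ∫⁻ x in {y : ℝ | abs y ≤ 1}, ENNReal.ofReal (abs x ^ p) ∂ν < ⊤}

/-- `E [ sup_{0 ≤ s ≤ t} |Z_s|^p ]` as a Lebesgue integral in `ℝ≥0∞`. -/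
def supMoment {Ω : Type*} [MeasurableSpace Ω] (P : Measure Ω)
    (Z : ℝ → Ω → ℝ) (p t : ℝ) : ℝ≥0∞ :=
  ∫⁻ ω, (⨆ s ∈ Set.Icc (0 : ℝ) t, (‖Z s ω‖₊ : ℝ≥0∞)) ^ p ∂P

/-- `φ` is regularly varying at zero with index `b`. -/
def RegVaryingAtZero (φ : ℝ → ℝ) (b : ℝ) : Prop :=
  ∀ s : ℝ, 0 < s → Tendsto (fun x => φ (s * x) / φ x) (𝓝[>] 0) (𝓝 (s ^ b))

/-- The slowly varying part `l(x) = x^{β+1} φ(x)` of `φ`. -/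
def svPart (φ : ℝ → ℝ) (β x : ℝ) : ℝ := x ^ (β + 1) * φ x

/-- `l̲(t) = l(t^{1/β})`. -/
def lbar (φ : ℝ → ℝ) (β t : ℝ) : ℝ := svPart φ β (t ^ (1 / β))

/-- Condition (1.5): on `{0 < |x| ≤ c}` the Lévy measure `ν` is dominated by the measure
with Lebesgue density `φ(|x|)`, where `φ : (0,c] → (0,∞)` is measurable and regularly
varying at zero with index `-(β+1)`. -/
def Cond15 (ν : Measure ℝ) (β c : ℝ) (φ : ℝ → ℝ) : Prop :=
  0 < c ∧ c ≤ 1 ∧ Measurable φ ∧ (∀ x ∈ Set.Ioc (0 : ℝ) c, 0 < φ x) ∧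
    RegVaryingAtZero φ (-(β + 1)) ∧
    ν.restrict {x : ℝ | 0 < abs x ∧ abs x ≤ c} ≤
      (volume.withDensity fun x => ENNReal.ofReal (φ |x|)).restrict {x : ℝ | 0 < abs x ∧ abs x ≤ c}

/-- Condition (1.6): on `{0 < |x| ≤ c}` the Lévy measure `ν` is dominated by the measure
with Lebesgue density `C·|x|^{-(β+1)}`. -/
def Cond16 (ν : Measure ℝ) (β c C : ℝ) : Prop :=
  0 < c ∧ c ≤ 1 ∧ 0 < C ∧
    ν.restrict {x : ℝ | 0 < abs x ∧ abs x ≤ c} ≤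
      (volume.withDensity fun x => ENNReal.ofReal (C / abs x ^ (β + 1))).restrict
        {x : ℝ | 0 < abs x ∧ abs x ≤ c}


/-! By symmetry the inner integral equals `2 ∫₀^{s^{1/β}} x^{r-β-1} l(x) dx`, where
`l(x) = x^{β+1} φ(x)` is slowly varying at `0`, so Karamata's theorem gives its asymptotics
`2/(r-β) · s^{r/β-1} l(s^{1/β})`. Integrating this equivalence in `s` and applying Karamata's
theorem once more, now to the slowly varying function `t ↦ l(t^{1/β})`, gives the outer
asymptotics. Karamata's theorem follows from the substitution `x = u y` and dominated
convergence; the dominating function comes from Potter's bound, which rests on the uniform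
convergence theorem for slowly varying functions. -/

theorem tendsto_rpow_nhdsGT_zero {p : ℝ} (hp : 0 < p) :
    Tendsto (fun t : ℝ => t ^ p) (𝓝[>] 0) (𝓝[>] 0) := by
  refine tendsto_nhdsWithin_iff.2
    ⟨?_, eventually_mem_nhdsWithin.mono fun t ht => Real.rpow_pos_of_pos ht _⟩
  simpa [Real.zero_rpow hp.ne'] using
    ((Real.continuousAt_rpow_const 0 p (Or.inr hp.le)).tendsto).mono_left nhdsWithin_le_nhds

namespace RegVaryingAtZero

theorem rpow_mul {φ : ℝ → ℝ} {b : ℝ} (h : RegVaryingAtZero φ b) (p : ℝ) :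
    RegVaryingAtZero (fun x => x ^ p * φ x) (p + b) := by
  intro s hs
  rw [Real.rpow_add hs]
  refine ((h s hs).const_mul (s ^ p)).congr' ?_
  filter_upwards [self_mem_nhdsWithin] with x (hx : 0 < x)
  rw [Real.mul_rpow hs.le hx.le, mul_assoc, mul_div_assoc,
    mul_div_mul_left _ _ (Real.rpow_pos_of_pos hx p).ne']

theorem comp_rpow {l : ℝ → ℝ} {b p : ℝ} (h : RegVaryingAtZero l b) (hp : 0 < p) :
    RegVaryingAtZero (fun t => l (t ^ p)) (b * p) := by
  intro s hs
  rw [mul_comm, Real.rpow_mul hs.le]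
  refine ((h (s ^ p) (Real.rpow_pos_of_pos hs p)).comp (tendsto_rpow_nhdsGT_zero hp)).congr' ?_
  filter_upwards [self_mem_nhdsWithin] with t (ht : 0 < t)
  simp only [Function.comp_apply, Real.mul_rpow hs.le ht.le]

theorem svPart {φ : ℝ → ℝ} {β : ℝ} (h : RegVaryingAtZero φ (-(β + 1))) :
    RegVaryingAtZero (svPart φ β) 0 := by
  have h' := h.rpow_mul (β + 1)
  rwa [add_neg_cancel] at h'

end RegVaryingAtZero

theorem Measurable.tendsto_measure_le_abs_add_sub {f : ℝ → ℝ} (hf : Measurable f)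
    (h : ∀ v, Tendsto (fun x => f (x + v) - f x) atTop (𝓝 0))
    (μ : Measure ℝ) [IsFiniteMeasure μ] {ε : ℝ} (hε : 0 < ε) :
    Tendsto (fun x => μ {s | ε ≤ |f (x + s) - f x|}) atTop (𝓝 0) := by
  refine tendsto_of_seq_tendsto fun z hz => ?_
  have hmeas : ∀ n, AEStronglyMeasurable (fun s => f (z n + s) - f (z n)) μ := fun n =>
    ((hf.comp (measurable_const.add measurable_id)).sub measurable_const).aestronglyMeasurable
  have hlim : ∀ᵐ s ∂μ, Tendsto (fun n => f (z n + s) - f (z n)) atTop (𝓝 0) :=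
    ae_of_all _ fun s => (h s).comp hz
  refine (tendstoInMeasure_of_tendsto_ae hmeas hlim (ENNReal.ofReal ε)
    (ENNReal.ofReal_pos.2 hε)).congr' (Eventually.of_forall fun n => ?_)
  simp [edist_dist, ENNReal.ofReal_le_ofReal_iff (abs_nonneg _)]

/-- The uniform convergence theorem for additively slowly varying functions. -/
theorem Measurable.tendstoUniformlyOn_add_sub {f : ℝ → ℝ} (hf : Measurable f)
    (h : ∀ v, Tendsto (fun x => f (x + v) - f x) atTop (𝓝 0)) :
    TendstoUniformlyOn (fun x v => f (x + v) - f x) 0 atTop (Icc 0 1) := by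
  rw [Metric.tendstoUniformlyOn_iff]
  intro ε hε
  set μ := volume.restrict (Icc (0 : ℝ) 2)
  have hsmall := (tendsto_order.1 (hf.tendsto_measure_le_abs_add_sub h μ (half_pos hε))).2
    (1 / 2) (by norm_num)
  obtain ⟨X, hX⟩ := eventually_atTop.1 hsmall
  filter_upwards [eventually_ge_atTop X] with x hx v hv
  set E := {s | ε / 2 ≤ |f (x + s) - f x|} ∩ Icc 0 2
  set F := (fun s => s + -v) ⁻¹' ({s | ε / 2 ≤ |f (x + v + s) - f (x + v)|} ∩ Icc 0 2)
  -- `[v, 2]` has length at least `1`, while `E` and `F` have measure less than `1 / 2` each.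
  obtain ⟨s, hs, hsE, hsF⟩ : ∃ s ∈ Icc v 2, s ∉ E ∧ s ∉ F := by
    by_contra! hcover
    have hE : volume E < 1 / 2 := by
      rw [← Measure.restrict_apply' measurableSet_Icc]; exact hX x hx
    have hF : volume F < 1 / 2 := by
      rw [measure_preimage_add_right, ← Measure.restrict_apply' measurableSet_Icc]
      exact hX (x + v) (by linarith [hv.1])
    have : volume (Icc v 2) < 1 := calc
      volume (Icc v 2) ≤ volume (E ∪ F) :=
        measure_mono fun s hs => (em (s ∈ E)).elim Or.inl fun h => Or.inr (hcover s hs h)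
      _ ≤ volume E + volume F := measure_union_le _ _
      _ < 1 / 2 + 1 / 2 := ENNReal.add_lt_add hE hF
      _ = 1 := ENNReal.add_halves 1
    rw [Real.volume_Icc, ← ENNReal.ofReal_one, ENNReal.ofReal_lt_ofReal_iff_of_nonneg] at this
    all_goals linarith [hv.2]
  have h1 : |f (x + s) - f x| < ε / 2 := by
    by_contra! h; exact hsE ⟨h, le_trans hv.1 hs.1, hs.2⟩
  have h2 : |f (x + v + (s - v)) - f (x + v)| < ε / 2 := by
    by_contra! h; exact hsF ⟨h, by linarith [hs.1], by linarith [hs.2, hv.1]⟩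
  rw [show x + v + (s - v) = x + s by ring] at h2
  rw [Pi.zero_apply, dist_zero_left, Real.norm_eq_abs]
  calc |f (x + v) - f x| ≤ |f (x + s) - f (x + v)| + |f (x + s) - f x| := by
        rw [abs_sub_comm (f (x + s))]; exact abs_sub_le _ _ _
    _ < ε := by linarith

theorem abs_add_sub_le_of_forall_Icc {f : ℝ → ℝ} {X δ : ℝ}
    (h : ∀ x ≥ X, ∀ v ∈ Icc (0 : ℝ) 1, |f (x + v) - f x| ≤ δ) {x w : ℝ} (hx : X ≤ x)
    (hw : 0 ≤ w) : |f (x + w) - f x| ≤ δ * (w + 1) := by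
  have hδ : 0 ≤ δ := by simpa using h X le_rfl 0 ⟨le_rfl, zero_le_one⟩
  have steps : ∀ n : ℕ, ∀ v ∈ Icc (0 : ℝ) 1, |f (x + n + v) - f x| ≤ δ * (n + 1) := by
    intro n
    induction n with
    | zero => simpa using h x hx
    | succ n ih =>
      intro v hv
      have hn : (0 : ℝ) ≤ n := n.cast_nonneg
      have hstep := h (x + (n + 1)) (by linarith) v hv
      have hprev := ih 1 ⟨zero_le_one, le_rfl⟩
      push_cast
      calc |f (x + (n + 1) + v) - f x|
          ≤ |f (x + (n + 1) + v) - f (x + (n + 1))| + |f (x + n + 1) - f x| := by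
            rw [← add_assoc x]; exact abs_sub_le _ _ _
        _ ≤ δ * (n + 1 + 1) := by linarith
  have hfloor := steps ⌊w⌋₊ (w - ⌊w⌋₊) ⟨by linarith [Nat.floor_le hw], by
    linarith [Nat.lt_floor_add_one w]⟩
  rw [add_assoc, add_sub_cancel] at hfloor
  exact hfloor.trans (mul_le_mul_of_nonneg_left (by linarith [Nat.floor_le hw]) hδ)

/-- Potter's bound for a slowly varying function at zero. -/
theorem RegVaryingAtZero.potter_bound {l : ℝ → ℝ} {c δ : ℝ} (hl : RegVaryingAtZero l 0)
    (hm : Measurable l) (hc : 0 < c) (hpos : ∀ x ∈ Ioc 0 c, 0 < l x) (hδ : 0 < δ) :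
    ∃ u₀ ∈ Ioc 0 c, ∀ u ∈ Ioc 0 u₀, ∀ x ∈ Ioc 0 u, l x ≤ Real.exp δ * (u / x) ^ δ * l u := by
  -- in the variable `y = -log x`, slow variation of `l` at `0` becomes `f (y + v) - f y → 0`
  set f : ℝ → ℝ := fun y => Real.log (l (Real.exp (-y)))
  have hexp : Tendsto (fun y : ℝ => Real.exp (-y)) atTop (𝓝[>] 0) :=
    tendsto_nhdsWithin_iff.2 ⟨Real.tendsto_exp_atBot.comp tendsto_neg_atTop_atBot,
      Eventually.of_forall fun y => Real.exp_pos _⟩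
  have hsmall : ∀ᶠ y in atTop, Real.exp (-y) ≤ c :=
    (Real.tendsto_exp_atBot.comp tendsto_neg_atTop_atBot).eventually_le_const hc
  have hconv : ∀ v, Tendsto (fun y => f (y + v) - f y) atTop (𝓝 0) := by
    intro v
    have hratio := (hl (Real.exp (-v)) (Real.exp_pos _)).comp hexp
    rw [Real.rpow_zero] at hratio
    have hlog : Tendsto (fun y => Real.log (l (Real.exp (-v) * Real.exp (-y)) /
        l (Real.exp (-y)))) atTop (𝓝 0) := by
      simpa [Function.comp_def] using (Real.continuousAt_log one_ne_zero).tendsto.comp hratio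
    refine hlog.congr' ?_
    filter_upwards [hsmall, (tendsto_atTop_add_const_right _ v tendsto_id).eventually hsmall]
      with y hy hyv
    have hmul : Real.exp (-v) * Real.exp (-y) = Real.exp (-(y + v)) := by
      rw [← Real.exp_add, neg_add, add_comm]
    simp only [f, hmul]
    exact Real.log_div (hpos _ ⟨Real.exp_pos _, hyv⟩).ne' (hpos _ ⟨Real.exp_pos _, hy⟩).ne'
  obtain ⟨X, hX⟩ := eventually_atTop.1 (Metric.tendstoUniformlyOn_iff.1
    ((hm.comp (Real.measurable_exp.comp measurable_neg)).log.tendstoUniformlyOn_add_sub hconv)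
    δ hδ)
  have hunif : ∀ x ≥ max X (-Real.log c), ∀ v ∈ Icc (0 : ℝ) 1, |f (x + v) - f x| ≤ δ :=
    fun x hx v hv => by
      have h := (hX x (le_of_max_le_left hx) v hv).le
      rwa [Pi.zero_apply, dist_zero_left, Real.norm_eq_abs] at h
  have hu₀c : Real.exp (-max X (-Real.log c)) ≤ c := by
    refine (Real.exp_le_exp.2 ?_).trans_eq (Real.exp_log hc)
    linarith [le_max_right X (-Real.log c)]
  refine ⟨_, ⟨Real.exp_pos _, hu₀c⟩, fun u hu x hx => ?_⟩
  have hlu := hpos u ⟨hu.1, hu.2.trans hu₀c⟩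
  have hlx := hpos x ⟨hx.1, hx.2.trans (hu.2.trans hu₀c)⟩
  have hlog := abs_add_sub_le_of_forall_Icc hunif (x := -Real.log u)
    (w := Real.log u - Real.log x) (by
      rw [le_neg, ← Real.exp_le_exp, Real.exp_log hu.1]; exact hu.2)
    (sub_nonneg.2 (Real.log_le_log hx.1 hx.2))
  simp only [f, show -Real.log u + (Real.log u - Real.log x) = -Real.log x by ring, neg_neg,
    Real.exp_log hu.1, Real.exp_log hx.1] at hlog
  calc l x = Real.exp (Real.log (l x)) := (Real.exp_log hlx).symm
    _ ≤ Real.exp (δ + δ * Real.log (u / x) + Real.log (l u)) := by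
        rw [Real.exp_le_exp, Real.log_div hu.1.ne' hx.1.ne']
        linarith [le_abs_self (Real.log (l x) - Real.log (l u))]
    _ = Real.exp δ * (u / x) ^ δ * l u := by
        rw [Real.exp_add, Real.exp_add, Real.exp_log hlu, Real.rpow_def_of_pos (div_pos hu.1 hx.1),
          mul_comm δ]

theorem setIntegral_Ioc_rpow_mul_eq (l : ℝ → ℝ) (a : ℝ) {u : ℝ} (hu : 0 < u) :
    ∫ x in Ioc 0 u, x ^ (a - 1) * l x = u ^ a * ∫ y in Ioc 0 1, y ^ (a - 1) * l (u * y) := by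
  have hscale := intervalIntegral.integral_comp_mul_left (fun x => x ^ (a - 1) * l x) hu.ne'
    (a := 0) (b := 1)
  have hsplit : ∫ y in (0 : ℝ)..1, (u * y) ^ (a - 1) * l (u * y) =
      u ^ (a - 1) * ∫ y in (0 : ℝ)..1, y ^ (a - 1) * l (u * y) := by
    rw [← intervalIntegral.integral_const_mul]
    refine intervalIntegral.integral_congr fun y hy => ?_
    rw [uIcc_of_le zero_le_one] at hy
    simp only [Real.mul_rpow hu.le hy.1, mul_assoc]
  rw [mul_zero, mul_one, hsplit, smul_eq_mul, eq_inv_mul_iff_mul_eq₀ hu.ne'] at hscale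
  rw [← intervalIntegral.integral_of_le hu.le, ← intervalIntegral.integral_of_le zero_le_one,
    ← hscale, ← mul_assoc, Real.rpow_sub_one hu.ne', mul_div_cancel₀ _ hu.ne']

theorem rpow_sub_one_mul_div_rpow {a δ u x : ℝ} (hu : 0 ≤ u) (hx : 0 < x) :
    x ^ (a - 1) * (u / x) ^ δ = u ^ δ * x ^ (a - δ - 1) := by
  rw [Real.div_rpow hu hx.le, mul_div_left_comm, ← Real.rpow_sub hx]
  ring_nf

theorem RegVaryingAtZero.exists_integrableOn_rpow_mul {l : ℝ → ℝ} {c a : ℝ}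
    (hl : RegVaryingAtZero l 0) (hm : Measurable l) (hc : 0 < c)
    (hpos : ∀ x ∈ Ioc 0 c, 0 < l x) (ha : 0 < a) :
    ∃ u₀ ∈ Ioc 0 c, IntegrableOn (fun x => x ^ (a - 1) * l x) (Ioc 0 u₀) := by
  obtain ⟨u₀, hu₀, hpot⟩ := hl.potter_bound hm hc hpos (half_pos ha)
  refine ⟨u₀, hu₀, ((intervalIntegral.intervalIntegrable_rpow' (r := a - a / 2 - 1)
    (by linarith) (a := 0) (b := u₀)).1.const_mul (Real.exp (a / 2) * l u₀ * u₀ ^ (a / 2))).mono'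
    ((measurable_id.pow_const _).mul hm).aestronglyMeasurable ?_⟩
  refine (ae_restrict_iff' measurableSet_Ioc).2 (ae_of_all _ fun x hx => ?_)
  rw [Real.norm_of_nonneg (mul_pos (Real.rpow_pos_of_pos hx.1 _)
    (hpos x ⟨hx.1, hx.2.trans hu₀.2⟩)).le]
  calc x ^ (a - 1) * l x
      ≤ x ^ (a - 1) * (Real.exp (a / 2) * (u₀ / x) ^ (a / 2) * l u₀) :=
        mul_le_mul_of_nonneg_left (hpot u₀ ⟨hu₀.1, le_rfl⟩ x hx) (Real.rpow_pos_of_pos hx.1 _).le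
    _ = Real.exp (a / 2) * l u₀ * (x ^ (a - 1) * (u₀ / x) ^ (a / 2)) := by ring
    _ = _ := by rw [rpow_sub_one_mul_div_rpow hu₀.1.le hx.1]; ring

/-- Karamata's theorem for a slowly varying function at zero. -/
theorem RegVaryingAtZero.tendsto_setIntegral_rpow_mul_div {l : ℝ → ℝ} {c a : ℝ}
    (hl : RegVaryingAtZero l 0) (hm : Measurable l) (hc : 0 < c)
    (hpos : ∀ x ∈ Ioc 0 c, 0 < l x) (ha : 0 < a) :
    Tendsto (fun u => (∫ x in Ioc 0 u, x ^ (a - 1) * l x) / (u ^ a * l u))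
      (𝓝[>] 0) (𝓝 (1 / a)) := by
  obtain ⟨u₀, hu₀, hpot⟩ := hl.potter_bound hm hc hpos (half_pos ha)
  have hlpos : ∀ x ∈ Ioc 0 u₀, 0 < l x := fun x hx => hpos x ⟨hx.1, hx.2.trans hu₀.2⟩
  -- after the substitution `x = u y` the ratio is an integral over `(0, 1]`, and Potter's
  -- bound makes dominated convergence applicable
  have hnear : Ioc 0 u₀ ∈ 𝓝[>] (0 : ℝ) := Ioc_mem_nhdsGT hu₀.1
  have hlimit : ∫ y in Ioc (0 : ℝ) 1, y ^ (a - 1) = 1 / a := by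
    rw [← intervalIntegral.integral_of_le zero_le_one, integral_rpow (by simp [ha]),
      sub_add_cancel, Real.zero_rpow ha.ne']
    simp
  rw [← hlimit]
  have hdct : Tendsto (fun u => ∫ y in Ioc (0 : ℝ) 1, y ^ (a - 1) * (l (u * y) / l u))
      (𝓝[>] 0) (𝓝 (∫ y in Ioc (0 : ℝ) 1, y ^ (a - 1))) := by
    refine tendsto_integral_filter_of_dominated_convergence
      (fun y => Real.exp (a / 2) * y ^ (a - a / 2 - 1))
      (Eventually.of_forall fun u => ((measurable_id.pow_const _).mul
        ((hm.comp (measurable_const_mul u)).div_const _)).aestronglyMeasurable) ?_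
      ((intervalIntegral.intervalIntegrable_rpow' (by linarith) (a := 0) (b := 1)).1.const_mul
        _) ?_
    · filter_upwards [hnear] with u hu
      refine (ae_restrict_iff' measurableSet_Ioc).2 (ae_of_all _ fun y hy => ?_)
      have huy : u * y ∈ Ioc 0 u := ⟨mul_pos hu.1 hy.1, mul_le_of_le_one_right hu.1.le hy.2⟩
      rw [Real.norm_of_nonneg (mul_pos (Real.rpow_pos_of_pos hy.1 _)
        (div_pos (hlpos _ ⟨huy.1, huy.2.trans hu.2⟩) (hlpos u hu))).le]
      calc y ^ (a - 1) * (l (u * y) / l u)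
          ≤ y ^ (a - 1) * (Real.exp (a / 2) * (1 / y) ^ (a / 2)) := by
            refine mul_le_mul_of_nonneg_left ?_ (Real.rpow_pos_of_pos hy.1 _).le
            rw [div_le_iff₀ (hlpos u hu), show 1 / y = u / (u * y) by
              rw [div_mul_cancel_left₀ hu.1.ne', one_div]]
            exact hpot u hu _ huy
        _ = Real.exp (a / 2) * y ^ (a - a / 2 - 1) := by
            rw [mul_left_comm, rpow_sub_one_mul_div_rpow zero_le_one hy.1, Real.one_rpow,
              one_mul]
    · refine (ae_restrict_iff' measurableSet_Ioc).2 (ae_of_all _ fun y hy => ?_)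
      simpa [mul_comm _ y] using (hl y hy.1).const_mul (y ^ (a - 1))
  refine hdct.congr' (eventually_of_mem hnear fun u hu => ?_)
  dsimp only
  rw [setIntegral_Ioc_rpow_mul_eq l a hu.1, mul_div_mul_left _ _
    (Real.rpow_pos_of_pos hu.1 a).ne', ← integral_div]
  simp only [mul_div_assoc]

theorem abs_integral_sub_le_mul_integral {α : Type*} [MeasurableSpace α] {μ : Measure α}
    {A g : α → ℝ} {ε : ℝ} (hA : AEStronglyMeasurable A μ) (hg : Integrable g μ)
    (h : ∀ᵐ s ∂μ, |A s - g s| ≤ ε * g s) :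
    |∫ s, A s ∂μ - ∫ s, g s ∂μ| ≤ ε * ∫ s, g s ∂μ := by
  have hAint : Integrable A μ := ((hg.const_mul ε).add hg.abs).mono' hA <| h.mono fun s hs => by
    simp only [Pi.add_apply, Real.norm_eq_abs]
    linarith [abs_sub_abs_le_abs_sub (A s) (g s)]
  rw [← integral_sub hAint hg, ← integral_const_mul]
  exact abs_integral_le_integral_abs.trans (integral_mono_ae (hAint.sub hg).abs (hg.const_mul ε) h)

theorem tendsto_setIntegral_div_of_tendsto_div {A g G : ℝ → ℝ} {τ L : ℝ} (hτ : 0 < τ)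
    (hA : AEStronglyMeasurable A (volume.restrict (Ioc 0 τ))) (hg : IntegrableOn g (Ioc 0 τ))
    (hgpos : ∀ s ∈ Ioc 0 τ, 0 < g s) (h : Tendsto (fun s => A s / g s) (𝓝[>] 0) (𝓝 1))
    (hG : Tendsto (fun t => (∫ s in Ioc 0 t, g s) / G t) (𝓝[>] 0) (𝓝 L)) :
    Tendsto (fun t => (∫ s in Ioc 0 t, A s) / G t) (𝓝[>] 0) (𝓝 L) := by
  have hIpos : ∀ t ∈ Ioc 0 τ, 0 < ∫ s in Ioc 0 t, g s := fun t ht => by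
    have hsub : Ioc 0 t ⊆ Ioc 0 τ := Ioc_subset_Ioc_right ht.2
    rw [← intervalIntegral.integral_of_le ht.1.le]
    exact intervalIntegral.intervalIntegral_pos_of_pos_on
      ((intervalIntegrable_iff_integrableOn_Ioc_of_le ht.1.le).2 (hg.mono_set hsub))
      (fun s hs => hgpos s (hsub (Ioo_subset_Ioc_self hs))) ht.1
  have hratio : Tendsto (fun t => (∫ s in Ioc 0 t, A s) / ∫ s in Ioc 0 t, g s)
      (𝓝[>] 0) (𝓝 1) := by
    refine Metric.tendsto_nhds.2 fun ε hε => ?_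
    obtain ⟨δ, hδ, hclose⟩ :=
      mem_nhdsGT_iff_exists_Ioc_subset.1 (Metric.tendsto_nhds.1 h (ε / 2) (half_pos hε))
    filter_upwards [Ioc_mem_nhdsGT (lt_min hδ hτ)] with t ht
    have htτ : t ∈ Ioc 0 τ := ⟨ht.1, ht.2.trans (min_le_right _ _)⟩
    have hsub : Ioc 0 t ⊆ Ioc 0 τ := Ioc_subset_Ioc_right htτ.2
    have hI := abs_integral_sub_le_mul_integral
      (hA.mono_measure (Measure.restrict_mono hsub le_rfl)) (hg.mono_set hsub) (ε := ε / 2) <| (ae_restrict_iff' measurableSet_Ioc).2 <|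
      ae_of_all _ fun s hs => by
        have hgs := hgpos s (hsub hs)
        have hs' := hclose ⟨hs.1, hs.2.trans (ht.2.trans (min_le_left _ _))⟩
        rw [mem_ofPred_eq, Real.dist_eq, div_sub_one hgs.ne', abs_div, abs_of_pos hgs,
          div_lt_iff₀ hgs] at hs'
        exact hs'.le
    have hIt := hIpos t htτ
    rw [Real.dist_eq, div_sub_one hIt.ne', abs_div, abs_of_pos hIt, div_lt_iff₀ hIt]
    linarith [mul_pos hε hIt]
  have hprod := hratio.mul hG
  rw [one_mul] at hprod
  refine hprod.congr' (eventually_of_mem (Ioc_mem_nhdsGT hτ) fun t ht => ?_)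
  exact div_mul_div_cancel₀ (hIpos t ht).ne'

theorem setIntegral_abs_le_comp_abs (F : ℝ → ℝ) (u : ℝ) :
    ∫ x in {y : ℝ | 0 < |y| ∧ |y| ≤ u}, F |x| = 2 * ∫ x in Ioc 0 u, F x := by
  have hind : {y : ℝ | 0 < |y| ∧ |y| ≤ u}.indicator (fun x => F |x|) =
      fun x => (Ioc 0 u).indicator F |x| := by
    ext x; simp only [Set.indicator_apply, mem_ofPred_eq, mem_Ioc]
  have hmeas : MeasurableSet {y : ℝ | 0 < |y| ∧ |y| ≤ u} :=
    measurableSet_Ioc.preimage continuous_abs.measurable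
  rw [← integral_indicator hmeas, hind,
    integral_comp_abs (f := (Ioc 0 u).indicator F), setIntegral_indicator measurableSet_Ioc,
    inter_eq_right.2 Ioc_subset_Ioi_self]

theorem stronglyMeasurable_setIntegral_abs_le {F ρ : ℝ → ℝ} (hF : Measurable F)
    (hρ : Measurable ρ) :
    StronglyMeasurable fun s => ∫ x in {y : ℝ | 0 < |y| ∧ |y| ≤ ρ s}, F x := by
  have hS : MeasurableSet {p : ℝ × ℝ | 0 < |p.2| ∧ |p.2| ≤ ρ p.1} :=
    (measurableSet_lt measurable_const measurable_snd.abs).inter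
      (measurableSet_le measurable_snd.abs (hρ.comp measurable_fst))
  convert ((hF.comp measurable_snd).indicator hS).stronglyMeasurable.integral_prod_right'
    (ν := volume) using 2 with s
  have hmeas : MeasurableSet {y : ℝ | 0 < |y| ∧ |y| ≤ ρ s} :=
    measurableSet_Ioc.preimage continuous_abs.measurable
  rw [← integral_indicator hmeas]
  rfl

theorem setIntegral_abs_rpow_mul_eq (φ : ℝ → ℝ) (β r u : ℝ) :
    ∫ x in {y : ℝ | 0 < |y| ∧ |y| ≤ u}, |x| ^ r * φ |x| =
      2 * ∫ x in Ioc 0 u, x ^ (r - β - 1) * svPart φ β x := by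
  rw [setIntegral_abs_le_comp_abs (fun x => x ^ r * φ x)]
  congr 1
  refine setIntegral_congr_fun measurableSet_Ioc fun x hx => ?_
  rw [svPart, ← mul_assoc, ← Real.rpow_add hx.1]
  ring_nf

theorem rpow_one_div_mem_Ioc {β c s : ℝ} (hβ : 0 < β) (hc : 0 < c) (hs : s ∈ Ioc 0 (c ^ β)) :
    s ^ (1 / β) ∈ Ioc 0 c := by
  refine ⟨Real.rpow_pos_of_pos hs.1 _, ?_⟩
  calc s ^ (1 / β) ≤ (c ^ β) ^ (1 / β) := Real.rpow_le_rpow hs.1.le hs.2 (one_div_pos.2 hβ).le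
    _ = c := by rw [← Real.rpow_mul hc.le, mul_one_div_cancel hβ.ne', Real.rpow_one]

theorem measurable_svPart {φ : ℝ → ℝ} (hφ : Measurable φ) (β : ℝ) : Measurable (svPart φ β) :=
  (measurable_id.pow_const _).mul hφ

theorem svPart_pos {φ : ℝ → ℝ} {c : ℝ} (hφ : ∀ x ∈ Ioc 0 c, 0 < φ x) (β : ℝ) :
    ∀ x ∈ Ioc 0 c, 0 < svPart φ β x := fun x hx =>
  mul_pos (Real.rpow_pos_of_pos hx.1 _) (hφ x hx)

theorem tendsto_setIntegral_abs_rpow_mul_div {β c r : ℝ} {φ : ℝ → ℝ} (hβ : 0 < β) (hc : 0 < c)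
    (hφm : Measurable φ) (hφpos : ∀ x ∈ Ioc 0 c, 0 < φ x) (hφrv : RegVaryingAtZero φ (-(β + 1)))
    (hr : β < r) :
    Tendsto (fun s => (∫ x in {y : ℝ | 0 < |y| ∧ |y| ≤ s ^ (1 / β)}, |x| ^ r * φ |x|) /
        (2 / (r - β) * (s ^ (r / β - 1) * svPart φ β (s ^ (1 / β))))) (𝓝[>] 0) (𝓝 1) := by
  have hrβ : 0 < r - β := sub_pos.2 hr
  have h := ((hφrv.svPart.tendsto_setIntegral_rpow_mul_div (measurable_svPart hφm β) hc
    (svPart_pos hφpos β) hrβ).comp (tendsto_rpow_nhdsGT_zero (one_div_pos.2 hβ))).const_mul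
    (r - β)
  rw [mul_one_div_cancel hrβ.ne'] at h
  refine h.congr' (eventually_of_mem self_mem_nhdsWithin fun s (hs : 0 < s) => ?_)
  dsimp only [Function.comp_apply]
  rw [setIntegral_abs_rpow_mul_eq φ β, show s ^ (r / β - 1) = (s ^ (1 / β)) ^ (r - β) by
    rw [← Real.rpow_mul hs.le]; field_simp]
  field_simp

theorem stmt15_general (β c r : ℝ) (φ : ℝ → ℝ)
    (hβ0 : 0 < β) (hc0 : 0 < c)
    (hφm : Measurable φ) (hφpos : ∀ x ∈ Set.Ioc (0 : ℝ) c, 0 < φ x)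
    (hφrv : RegVaryingAtZero φ (-(β + 1)))
    (hr : β < r) :
    Tendsto (fun t =>
        (∫ s in Set.Ioc (0 : ℝ) t,
          ∫ x in {y : ℝ | 0 < abs y ∧ abs y ≤ s ^ (1 / β)}, abs x ^ r * φ (abs x)) /
        (2 * β / ((r - β) * r) * (t ^ (r / β) * svPart φ β (t ^ (1 / β)))))
      (𝓝[>] 0) (𝓝 1) ∧
    Tendsto (fun s =>
        (∫ x in {y : ℝ | 0 < abs y ∧ abs y ≤ s ^ (1 / β)}, abs x ^ r * φ (abs x)) /
        (2 / (r - β) * (s ^ (r / β - 1) * svPart φ β (s ^ (1 / β)))))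
      (𝓝[>] 0) (𝓝 1) := by
  have hinner := tendsto_setIntegral_abs_rpow_mul_div hβ0 hc0 hφm hφpos hφrv hr
  refine ⟨?_, hinner⟩
  have hL : RegVaryingAtZero (fun t => svPart φ β (t ^ (1 / β))) 0 := by
    simpa using hφrv.svPart.comp_rpow (one_div_pos.2 hβ0)
  have hLm : Measurable fun t => svPart φ β (t ^ (1 / β)) :=
    (measurable_svPart hφm β).comp (measurable_id.pow_const _)
  have hLpos : ∀ t ∈ Ioc 0 (c ^ β), 0 < svPart φ β (t ^ (1 / β)) := fun t ht =>
    svPart_pos hφpos β _ (rpow_one_div_mem_Ioc hβ0 hc0 ht)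
  have hcβ : 0 < c ^ β := Real.rpow_pos_of_pos hc0 β
  have ha : 0 < r / β := div_pos (hβ0.trans hr) hβ0
  obtain ⟨τ, hτ, hint⟩ := hL.exists_integrableOn_rpow_mul hLm hcβ hLpos ha
  have houter := (hL.tendsto_setIntegral_rpow_mul_div hLm hcβ hLpos ha).const_mul
    (2 / (r - β) / (2 * β / ((r - β) * r)))
  rw [show 2 / (r - β) / (2 * β / ((r - β) * r)) * (1 / (r / β)) = 1 by
    field_simp [(sub_pos.2 hr).ne', (hβ0.trans hr).ne']] at houter
  refine tendsto_setIntegral_div_of_tendsto_div hτ.1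
    (stronglyMeasurable_setIntegral_abs_le (by fun_prop) (by fun_prop)).aestronglyMeasurable
    (hint.const_mul _) (fun s hs => ?_) hinner (houter.congr' (Eventually.of_forall fun t => ?_))
  · exact mul_pos (div_pos two_pos (sub_pos.2 hr))
      (mul_pos (Real.rpow_pos_of_pos hs.1 _) (hLpos s ⟨hs.1, hs.2.trans hτ.2⟩))
  · dsimp only
    rw [integral_const_mul]
    exact (mul_div_mul_comm _ _ _ _).symm

theorem stmt15 (β c r : ℝ) (φ : ℝ → ℝ)
    (hβ0 : 0 < β) (hβ2 : β ≤ 2) (hc0 : 0 < c) (hc1 : c ≤ 1)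
    (hφm : Measurable φ) (hφpos : ∀ x ∈ Set.Ioc (0 : ℝ) c, 0 < φ x)
    (hφrv : RegVaryingAtZero φ (-(β + 1)))
    (hr : β < r) :
    Tendsto (fun t =>
        (∫ s in Set.Ioc (0 : ℝ) t,
          ∫ x in {y : ℝ | 0 < abs y ∧ abs y ≤ s ^ (1 / β)}, abs x ^ r * φ (abs x)) /
        (2 * β / ((r - β) * r) * (t ^ (r / β) * svPart φ β (t ^ (1 / β)))))
      (𝓝[>] 0) (𝓝 1) ∧
    Tendsto (fun s =>
        (∫ x in {y : ℝ | 0 < abs y ∧ abs y ≤ s ^ (1 / β)}, abs x ^ r * φ (abs x)) /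
        (2 / (r - β) * (s ^ (r / β - 1) * svPart φ β (s ^ (1 / β)))))
      (𝓝[>] 0) (𝓝 1) :=
  stmt15_general β c r φ hβ0 hc0 hφm hφpos hφrv hr

end
end

section
/- Let Y be a real random variable on a probability space with E|Y|^p < ∞ for some p ∈ (0,1), and let C be a nonzero real constant. Then E[ |tY + C·t·log t|^p ] ∼ |C|^p · t^p · |log t|^p as t → 0+, i.e. the ratio E|tY + Ct log t|^p / (|C|^p t^p |log t|^p) tends to 1 as t → 0+. -/
open MeasureTheory ProbabilityTheory Filter Set Topology ENNReal NNReal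

noncomputable section

/-! Writing `t Y + C t log t = t (Y + c)` with `c = C log t`, the ratio is
`E|Y + c|^p / |c|^p`, and `|c| → ∞` as `t → 0+`. For `p ≤ 1` the map `x ↦ |x|^p` is
subadditive, so `||Y + c|^p - |c|^p| ≤ |Y|^p`: the numerator differs from `|c|^p` by at most
`E|Y|^p`, which is negligible against `|c|^p`. -/

lemma abs_add_rpow_le {p : ℝ} (hp0 : 0 ≤ p) (hp1 : p ≤ 1) (a b : ℝ) :
    |a + b| ^ p ≤ |a| ^ p + |b| ^ p :=
  (Real.rpow_le_rpow (abs_nonneg _) (abs_add_le a b) hp0).trans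
    (Real.rpow_add_le_add_rpow (abs_nonneg a) (abs_nonneg b) hp0 hp1)

lemma abs_abs_add_rpow_sub_le {p : ℝ} (hp0 : 0 ≤ p) (hp1 : p ≤ 1) (a b : ℝ) :
    |(|a + b| ^ p - |b| ^ p)| ≤ |a| ^ p := by
  have h₁ := abs_add_rpow_le hp0 hp1 a b
  have h₂ := abs_add_rpow_le hp0 hp1 (a + b) (-a)
  rw [add_neg_cancel_comm, abs_neg] at h₂
  exact abs_sub_le_iff.2 ⟨by linarith, by linarith⟩

section ShiftedMoment

variable {Ω : Type*} [MeasurableSpace Ω] {P : Measure Ω} {Y : Ω → ℝ} {p : ℝ}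

lemma integrable_abs_add_rpow [IsFiniteMeasure P] (hp0 : 0 ≤ p) (hp1 : p ≤ 1)
    (hY : AEMeasurable Y P) (hint : Integrable (fun ω => |Y ω| ^ p) P) (c : ℝ) :
    Integrable (fun ω => |Y ω + c| ^ p) P := by
  refine (hint.add (integrable_const (|c| ^ p))).mono' ?_ (ae_of_all _ fun ω => ?_)
  · exact ((hY.add_const c).abs.pow_const p).aestronglyMeasurable
  · rw [Real.norm_eq_abs, abs_of_nonneg (by positivity)]
    exact abs_add_rpow_le hp0 hp1 (Y ω) c

variable [IsProbabilityMeasure P]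

lemma abs_integral_abs_add_rpow_sub_le (hp0 : 0 ≤ p) (hp1 : p ≤ 1)
    (hY : AEMeasurable Y P) (hint : Integrable (fun ω => |Y ω| ^ p) P) (c : ℝ) :
    |(∫ ω, |Y ω + c| ^ p ∂P) - |c| ^ p| ≤ ∫ ω, |Y ω| ^ p ∂P := by
  have hint_c := integrable_abs_add_rpow hp0 hp1 hY hint c
  calc |(∫ ω, |Y ω + c| ^ p ∂P) - |c| ^ p|
      = |∫ ω, (|Y ω + c| ^ p - |c| ^ p) ∂P| := by
        rw [integral_sub hint_c (integrable_const _), integral_const, probReal_univ, one_smul]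
    _ ≤ ∫ ω, |(|Y ω + c| ^ p - |c| ^ p)| ∂P := abs_integral_le_integral_abs
    _ ≤ ∫ ω, |Y ω| ^ p ∂P :=
        integral_mono (hint_c.sub (integrable_const _)).abs hint
          fun ω => abs_abs_add_rpow_sub_le hp0 hp1 (Y ω) c

theorem tendsto_integral_abs_add_rpow_div (hp0 : 0 < p) (hp1 : p ≤ 1)
    (hY : AEMeasurable Y P) (hint : Integrable (fun ω => |Y ω| ^ p) P) :
    Tendsto (fun c : ℝ => (∫ ω, |Y ω + c| ^ p ∂P) / |c| ^ p) (Bornology.cobounded ℝ) (𝓝 1) := by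
  set M := ∫ ω, |Y ω| ^ p ∂P
  have hpow : Tendsto (fun c : ℝ => |c| ^ p) (Bornology.cobounded ℝ) atTop :=
    (_root_.tendsto_rpow_atTop hp0).comp tendsto_norm_cobounded_atTop
  have herr : Tendsto (fun c : ℝ => M / |c| ^ p) (Bornology.cobounded ℝ) (𝓝 0) :=
    tendsto_const_nhds.div_atTop hpow
  rw [tendsto_iff_norm_sub_tendsto_zero]
  refine squeeze_zero' (Eventually.of_forall fun _ => norm_nonneg _) ?_ herr
  filter_upwards [hpow.eventually_gt_atTop 0] with c hc
  rw [Real.norm_eq_abs, div_sub_one hc.ne', abs_div, abs_of_pos hc]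
  exact div_le_div_of_nonneg_right
    (abs_integral_abs_add_rpow_sub_le hp0.le hp1 hY hint c) hc.le

end ShiftedMoment

lemma tendsto_const_mul_log_nhdsGT_zero_cobounded {C : ℝ} (hC : C ≠ 0) :
    Tendsto (fun t : ℝ => C * Real.log t) (𝓝[>] 0) (Bornology.cobounded ℝ) := by
  rw [← tendsto_norm_atTop_iff_cobounded]
  simp only [norm_mul, Real.norm_eq_abs]
  exact (tendsto_abs_atBot_atTop.comp Real.tendsto_log_nhdsGT_zero).const_mul_atTop
    (abs_pos.2 hC)

lemma integral_abs_mul_add_rpow {Ω : Type*} [MeasurableSpace Ω] (P : Measure Ω)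
    (Y : Ω → ℝ) {t : ℝ} (ht : 0 ≤ t) (p c : ℝ) :
    ∫ ω, |t * Y ω + t * c| ^ p ∂P = t ^ p * ∫ ω, |Y ω + c| ^ p ∂P := by
  rw [← integral_const_mul]
  congr 1 with ω
  rw [← mul_add, abs_mul, abs_of_nonneg ht, Real.mul_rpow ht (abs_nonneg _)]

theorem stmt18 {Ω : Type*} [MeasurableSpace Ω] (P : Measure Ω)
    [IsProbabilityMeasure P] (Y : Ω → ℝ) (p C : ℝ)
    (hY : Measurable Y) (hp0 : 0 < p) (hp1 : p < 1)
    (hmom : ∫⁻ ω, ENNReal.ofReal (|Y ω| ^ p) ∂P < ⊤)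
    (hC : C ≠ 0) :
    Tendsto (fun t : ℝ =>
        (∫ ω, |t * Y ω + C * t * Real.log t| ^ p ∂P) /
          (|C| ^ p * t ^ p * |Real.log t| ^ p))
      (𝓝[>] 0) (𝓝 1) := by
  have hint : Integrable (fun ω => |Y ω| ^ p) P :=
    ⟨(hY.abs.pow_const p).aestronglyMeasurable,
      (hasFiniteIntegral_iff_ofReal (ae_of_all _ fun _ => by positivity)).2 hmom⟩
  refine ((tendsto_integral_abs_add_rpow_div hp0 hp1.le hY.aemeasurable hint).comp
    (tendsto_const_mul_log_nhdsGT_zero_cobounded hC)).congr' ?_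
  filter_upwards [self_mem_nhdsWithin] with t (ht : 0 < t)
  have hnum := integral_abs_mul_add_rpow P Y ht.le p (C * Real.log t)
  have hden : |C| ^ p * t ^ p * |Real.log t| ^ p = t ^ p * |C * Real.log t| ^ p := by
    rw [abs_mul, Real.mul_rpow (abs_nonneg _) (abs_nonneg _)]
    ring
  simp only [Function.comp_apply, hden, mul_comm C t, mul_assoc, hnum,
    mul_div_mul_left _ _ (Real.rpow_pos_of_pos ht p).ne']

end
end

section
/- Let γ > 0 and p > 1/2, and for t > 0 define the p-th moment of the inverse Gaussian distribution m(t) = (t/√(2π)) ∫₀^∞ x^{p−3/2} exp( −(1/2)·( t/√x − γ√x )² ) dx. Then m(t) ∼ (2^{p−1} Γ(p−1/2) / (√π · γ^{2p−1})) · t as t → 0+, i.e. m(t)/t converges to 2^{p−1} Γ(p−1/2) / (√π · γ^{2p−1}). -/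
open MeasureTheory ProbabilityTheory Filter Set Topology ENNReal NNReal

noncomputable section

/-!
For `t > 0`, `m(t) / t = (2π)^{-1/2} ∫₀^∞ x^{p-3/2} exp(-(t/√x - γ√x)²/2) dx`. Expanding the
square, the exponent is `-t²/(2x) + tγ - γ²x/2 ≤ γ - γ²x/2` for `t ≤ 1`, so dominated
convergence lets `t → 0` under the integral, leaving the Gamma integral
`∫₀^∞ x^{p-3/2} e^{-γ²x/2} dx = (2/γ²)^{p-1/2} Γ(p - 1/2)`.
-/

open Real

lemma neg_half_mul_sq_div_sqrt_sub_le (t γ : ℝ) {x : ℝ} (hx : 0 < x) :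
    -(1 / 2) * (t / √x - γ * √x) ^ 2 ≤ t * γ - γ ^ 2 / 2 * x := by
  obtain ⟨s, hs, rfl⟩ : ∃ s : ℝ, 0 < s ∧ s ^ 2 = x := ⟨√x, sqrt_pos.mpr hx, sq_sqrt hx.le⟩
  have hexpand : (t / s - γ * s) ^ 2 = t ^ 2 / s ^ 2 - 2 * t * γ + γ ^ 2 * s ^ 2 := by
    field_simp
    ring
  rw [sqrt_sq hs.le, hexpand]
  nlinarith [div_nonneg (sq_nonneg t) (sq_nonneg s)]

lemma integrableOn_rpow_mul_exp_neg_mul {s b : ℝ} (hs : -1 < s) (hb : 0 < b) :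
    IntegrableOn (fun x : ℝ => x ^ s * exp (-(b * x))) (Ioi 0) := by
  simpa [Real.rpow_one] using integrableOn_rpow_mul_exp_neg_mul_rpow hs one_pos hb

lemma tendsto_integral_rpow_mul_exp_neg_half_sq_div_sqrt_sub {γ s : ℝ} (hγ : 0 < γ)
    (hs : -1 < s) :
    Tendsto (fun t : ℝ => ∫ x in Ioi 0, x ^ s * exp (-(1 / 2) * (t / √x - γ * √x) ^ 2))
      (𝓝 0) (𝓝 (∫ x in Ioi 0, x ^ s * exp (-(γ ^ 2 / 2 * x)))) := by
  refine tendsto_integral_filter_of_dominated_convergence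
    (fun x => exp γ * (x ^ s * exp (-(γ ^ 2 / 2 * x)))) ?_ ?_
    ((integrableOn_rpow_mul_exp_neg_mul hs (by positivity)).const_mul _) ?_
  · exact Eventually.of_forall fun t => by fun_prop
  · filter_upwards [eventually_lt_nhds one_pos] with t ht
    filter_upwards [ae_restrict_mem measurableSet_Ioi] with x (hx : 0 < x)
    have hexp : -(1 / 2) * (t / √x - γ * √x) ^ 2 ≤ γ + -(γ ^ 2 / 2 * x) := by
      have htγ : t * γ ≤ γ := mul_le_of_le_one_left hγ.le ht.le
      linarith [neg_half_mul_sq_div_sqrt_sub_le t γ hx]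
    rw [norm_of_nonneg (by positivity), mul_left_comm, ← exp_add]
    gcongr
  · filter_upwards [ae_restrict_mem measurableSet_Ioi] with x (hx : 0 < x)
    have hat0 : -(1 / 2) * ((0 : ℝ) / √x - γ * √x) ^ 2 = -(γ ^ 2 / 2 * x) := by
      rw [zero_div, zero_sub, neg_sq, mul_pow, sq_sqrt hx.le]
      ring
    have hcont : ContinuousAt
        (fun t : ℝ => x ^ s * exp (-(1 / 2) * (t / √x - γ * √x) ^ 2)) 0 := by
      fun_prop
    simpa only [hat0] using hcont.tendsto

lemma integral_rpow_mul_exp_neg_mul_div_sqrt_two_pi {γ p : ℝ} (hγ : 0 < γ) (hp : 1 / 2 < p) :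
    (∫ x in Ioi 0, x ^ (p - 3 / 2) * exp (-(γ ^ 2 / 2 * x))) / √(2 * π) =
      2 ^ (p - 1) * Gamma (p - 1 / 2) / (√π * γ ^ (2 * p - 1)) := by
  have hgamma := integral_rpow_mul_exp_neg_mul_Ioi (a := p - 1 / 2) (r := γ ^ 2 / 2)
    (by linarith) (by positivity)
  have hγpow : (1 / (γ ^ 2 / 2)) ^ (p - 1 / 2) = 2 ^ (p - 1 / 2) / γ ^ (2 * p - 1) := by
    rw [one_div_div, div_rpow zero_le_two (sq_nonneg γ), ← rpow_natCast γ 2,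
      ← rpow_mul hγ.le]
    congr 2
    push_cast
    ring
  have htwo : (2 : ℝ) ^ (p - 1 / 2) = 2 ^ (p - 1) * √2 := by
    rw [Real.sqrt_eq_rpow, ← rpow_add zero_lt_two]
    ring_nf
  rw [show p - 1 / 2 - 1 = p - 3 / 2 by ring] at hgamma
  rw [hgamma, hγpow, htwo, sqrt_mul zero_le_two]
  field_simp

theorem stmt19 (γ p : ℝ) (hγ : 0 < γ) (hp : 1 / 2 < p) :
    Tendsto (fun t : ℝ =>
        ((t / Real.sqrt (2 * Real.pi)) *
          ∫ x in Set.Ioi (0 : ℝ),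
            x ^ (p - 3 / 2) *
              Real.exp (-(1 / 2) * (t / Real.sqrt x - γ * Real.sqrt x) ^ 2)) / t)
      (𝓝[>] 0)
      (𝓝 (2 ^ (p - 1) * Real.Gamma (p - 1 / 2) / (Real.sqrt Real.pi * γ ^ (2 * p - 1)))) := by
  have hlim := (tendsto_integral_rpow_mul_exp_neg_half_sq_div_sqrt_sub hγ
    (by linarith : -1 < p - 3 / 2)).div_const √(2 * π)
  rw [integral_rpow_mul_exp_neg_mul_div_sqrt_two_pi hγ hp] at hlim
  refine (hlim.mono_left nhdsWithin_le_nhds).congr' ?_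
  filter_upwards [self_mem_nhdsWithin] with t (ht : 0 < t)
  rw [mul_div_right_comm, div_div_cancel_left' ht.ne', inv_mul_eq_div]

end
end
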